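/- Let {H_n} be a Positive Linear Recurrence Sequence with length L and size S. For n > 2L and 0 ≤ t < S, the probability that the second-to-last block has size t satisfies P(Z_n = t) = (H_{n−ℓ(t)+1} − H_{n−ℓ(t)})/(H_{n+1} − H_n). -/

import Mathlib

open scoped BigOperators
open Filter

/-- A Positive Linear Recurrence Sequence (PLRS): a sequence `H` of positive integers
satisfying `H (n+1) = c 1 * H n + ⋯ + c L * H (n+1-L)` for `n ≥ L`, with
`H 1 = 1` and initial conditions `H (n+1) = c 1 * H n + ⋯ + c n * H 1 + 1` for `1 ≤ n < L`. -/
structure PLRS where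
  /-- the length of the recurrence -/
  L : ℕ
  /-- the coefficients of the recurrence (indexed from 1) -/
  c : ℕ → ℕ
  /-- the sequence itself (indexed from 1) -/
  H : ℕ → ℕ
  L_pos : 0 < L
  c1_pos : 0 < c 1
  cL_pos : 0 < c L
  H_pos : ∀ n, 1 ≤ n → 0 < H n
  H_one : H 1 = 1
  H_rec : ∀ n, L ≤ n → H (n + 1) = ∑ i ∈ Finset.Icc 1 L, c i * H (n + 1 - i)
  H_init : ∀ n, 1 ≤ n → n < L → H (n + 1) = (∑ i ∈ Finset.Icc 1 n, c i * H (n + 1 - i)) + 1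

namespace PLRS

/-- The size `S = c 1 + ⋯ + c L` of a PLRS. -/
def size (P : PLRS) : ℕ := ∑ i ∈ Finset.Icc 1 P.L, P.c i

/-- Legality of a coefficient sequence `(a_1, …, a_m)` (as a list), not including the
requirement `a_1 > 0`: either (Condition 1) `m < L` and `a_i = c_i` for all `i`, or
(Condition 2) there is `s ∈ {1, …, L}` with `a_1 = c_1, …, a_{s-1} = c_{s-1}`, `a_s < c_s`,
and `(a_{s+1}, …, a_m)` legal (possibly empty). -/
inductive IsLegal (P : PLRS) : List ℕ → Prop
  | cond1 (m : ℕ) (h1 : 1 ≤ m) (h2 : m < P.L) :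
      IsLegal P ((List.range m).map fun i => P.c (i + 1))
  | cond2 (s : ℕ) (hs1 : 1 ≤ s) (hs2 : s ≤ P.L) (a : ℕ) (ha : a < P.c s)
      (rest : List ℕ) (hrest : IsLegal P rest) :
      IsLegal P (((List.range (s - 1)).map fun i => P.c (i + 1)) ++ a :: rest)
  | cond2_last (s : ℕ) (hs1 : 1 ≤ s) (hs2 : s ≤ P.L) (a : ℕ) (ha : a < P.c s) :
      IsLegal P (((List.range (s - 1)).map fun i => P.c (i + 1)) ++ [a])

/-- A legal decomposition: a legal coefficient sequence with `a_1 > 0`. -/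
def LegalDecomp (P : PLRS) (l : List ℕ) : Prop := P.IsLegal l ∧ 0 < l.headI

/-- The value `∑_{i=1}^m a_i H_{m+1-i}` of a coefficient sequence `(a_1, …, a_m)`. -/
def value (P : PLRS) (l : List ℕ) : ℕ :=
  ∑ i ∈ Finset.range l.length, l.getD i 0 * P.H (l.length - i)

/-- `Ω_n`: the set of legal decompositions of integers in `[H_n, H_{n+1})`. -/
def Omega (P : PLRS) (n : ℕ) : Set (List ℕ) :=
  {l | P.LegalDecomp l ∧ P.H n ≤ P.value l ∧ P.value l < P.H (n + 1)}

/-- Expectation of `g` under the uniform probability measure on a (finite) set `A`. -/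
noncomputable def expectOn (A : Set (List ℕ)) (g : List ℕ → ℝ) : ℝ :=
  (∑ᶠ l ∈ A, g l) / (A.ncard : ℝ)

/-- Variance of `g` under the uniform probability measure on a (finite) set `A`. -/
noncomputable def varOn (A : Set (List ℕ)) (g : List ℕ → ℝ) : ℝ :=
  expectOn A (fun l => g l ^ 2) - (expectOn A g) ^ 2

/-- Expectation of `g` under the uniform probability measure on `Ω_n`. -/
noncomputable def expect (P : PLRS) (n : ℕ) (g : List ℕ → ℝ) : ℝ := expectOn (P.Omega n) g

/-- Probability of the event `A` under the uniform probability measure on `Ω_n`. -/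
noncomputable def prob (P : PLRS) (n : ℕ) (A : Set (List ℕ)) : ℝ :=
  ((P.Omega n ∩ A).ncard : ℝ) / ((P.Omega n).ncard : ℝ)

/-- `E[K_n]`, the expected number of summands on `Ω_n`. -/
noncomputable def expectK (P : PLRS) (n : ℕ) : ℝ := P.expect n fun l => (l.sum : ℝ)

/-- `Var[K_n]`, the variance of the number of summands on `Ω_n`. -/
noncomputable def varK (P : PLRS) (n : ℕ) : ℝ := varOn (P.Omega n) fun l => (l.sum : ℝ)

/-- The first index (0-based) at which the coefficient list disagrees with `c`. -/
def firstMismatch (P : PLRS) (l : List ℕ) : Option ℕ :=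
  (List.range l.length).find? fun i => l.getD i 0 != P.c (i + 1)

/-- The block decomposition of a legal coefficient sequence: repeatedly split off the
Type 2 block `(c_1, …, c_{s-1}, a_s)` with `a_s ≠ c_s`; if the whole remaining sequence
agrees with `c` it is a single (Type 1) block. -/
def blocks (P : PLRS) (l : List ℕ) : List (List ℕ) :=
  if h : l = [] then []
  else
    match P.firstMismatch l with
    | none => [l]
    | some i => l.take (i + 1) :: P.blocks (l.drop (i + 1))
termination_by l.length
decreasing_by
  have hl : 0 < l.length := List.length_pos_iff.mpr h
  simp only [List.length_drop]
  omega

/-- The second-to-last block of a legal decomposition. -/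
def stlBlock (P : PLRS) (l : List ℕ) : List ℕ := ((P.blocks l).reverse).getD 1 []

/-- `Z_n(ω)`: the size (sum of coefficients) of the second-to-last block. -/
def Z (P : PLRS) (l : List ℕ) : ℕ := (P.stlBlock l).sum

/-- The length function `ℓ(t)`: the length of the Type 2 block of size `t`, i.e., the least
`s` with `t < c_1 + ⋯ + c_s`. -/
noncomputable def ell (P : PLRS) (t : ℕ) : ℕ :=
  sInf {s : ℕ | t < ∑ i ∈ Finset.Icc 1 s, P.c i}

/-- `L_n(ω) = ℓ(Z_n(ω))`: the length of the second-to-last block. -/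
noncomputable def Lfn (P : PLRS) (l : List ℕ) : ℕ := P.ell (P.Z l)

/-- `h_t`: remove the second-to-last block of a legal decomposition. -/
def removeSTL (P : PLRS) (l : List ℕ) : List ℕ :=
  ((((P.blocks l).reverse).eraseIdx 1).reverse).flatten

/-- The Type 2 block of size `t`: `(c_1, …, c_{ℓ(t)-1}, t - (c_1 + ⋯ + c_{ℓ(t)-1}))`. -/
noncomputable def type2Block (P : PLRS) (t : ℕ) : List ℕ :=
  ((List.range (P.ell t - 1)).map fun i => P.c (i + 1)) ++
    [t - ∑ i ∈ Finset.Icc 1 (P.ell t - 1), P.c i]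

/-- Insert the Type 2 block of size `t` immediately before the last block. -/
noncomputable def insertSTL (P : PLRS) (t : ℕ) (l : List ℕ) : List ℕ :=
  ((((P.blocks l).reverse).insertIdx 1 (P.type2Block t)).reverse).flatten

/-- A Type 1 block: `(c_1, …, c_m)` with `1 ≤ m < L`. -/
def IsType1Block (P : PLRS) (bl : List ℕ) : Prop :=
  ∃ m, 1 ≤ m ∧ m < P.L ∧ bl = (List.range m).map fun i => P.c (i + 1)

/-- A Type 2 block: `(c_1, …, c_{s-1}, a)` with `1 ≤ s ≤ L` and `a < c_s`. -/
def IsType2Block (P : PLRS) (bl : List ℕ) : Prop :=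
  ∃ s, 1 ≤ s ∧ s ≤ P.L ∧ ∃ a, a < P.c s ∧
    bl = ((List.range (s - 1)).map fun i => P.c (i + 1)) ++ [a]

/-- Conditional expectation of `g` on `Ω_n` given `Z_n = t`. -/
noncomputable def condExpect (P : PLRS) (n t : ℕ) (g : List ℕ → ℝ) : ℝ :=
  expectOn (P.Omega n ∩ {l | P.Z l = t}) g

end PLRS

open PLRS

/-!
Read from the left, a legal list of length `n` is either `(c_1, …, c_n)` or starts with
`(c_1, …, c_{s-1}, a)`, `a < c_s`, followed by a legal tail; `s`, `a` and the tail are recovered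
greedily from the value, so evaluation is a bijection from the legal lists of length `n` onto
`[0, H_{n+1})`. Those with leading coefficient `0` are `0 :: (legal list of length n - 1)`, which
leaves `H_{n+1} - H_n` legal decompositions of length `n`; as `H` is monotone, these form `Ω_n`.

Every block has length at most `L`, so for `n > 2L` a decomposition in `Ω_n` has at least three
blocks. A Type 2 block is determined by its size `t` and has length `ℓ(t)`, so deleting the
second-to-last block maps `{Z_n = t}` bijectively onto `Ω_{n - ℓ(t)}`; the inverse inserts the
Type 2 block of size `t` before the last block.
-/

lemma List.exists_eq_append_pair {α : Type*} {l : List α} (h : 2 ≤ l.length) :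
    ∃ u p q, l = u ++ [p, q] := by
  rcases l.eq_nil_or_concat' with rfl | ⟨v, q, rfl⟩
  · simp at h
  rcases v.eq_nil_or_concat' with rfl | ⟨u, p, rfl⟩
  · simp at h
  exact ⟨u, p, q, by simp⟩

namespace PLRS

section Counting

variable (P : PLRS)

def cPrefix (m : ℕ) : List ℕ := (List.range m).map fun i => P.c (i + 1)

def valueFrom : List ℕ → ℕ → ℕ
  | [], _ => 0
  | a :: l, n => a * P.H n + valueFrom l (n - 1)

def prefixValue (n s : ℕ) : ℕ := ∑ i ∈ Finset.Icc 1 s, P.c i * P.H (n + 1 - i)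

def cSum (k : ℕ) : ℕ := ∑ i ∈ Finset.Icc 1 k, P.c i

@[simp] lemma cPrefix_zero : P.cPrefix 0 = [] := rfl

lemma cPrefix_succ (m : ℕ) : P.cPrefix (m + 1) = P.cPrefix m ++ [P.c (m + 1)] := by
  simp [cPrefix, List.range_succ]

@[simp] lemma length_cPrefix (m : ℕ) : (P.cPrefix m).length = m := by simp [cPrefix]

lemma getD_cPrefix_append {m j : ℕ} (h : j < m) (r : List ℕ) :
    (P.cPrefix m ++ r).getD j 0 = P.c (j + 1) := by
  rw [List.getD_append _ _ _ _ (by simpa using h), List.getD_eq_getElem _ _ (by simpa using h)]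
  simp [cPrefix]

lemma sum_cPrefix (m : ℕ) : (P.cPrefix m).sum = P.cSum m := by
  induction m with
  | zero => simp [cSum]
  | succ m ih =>
    rw [cPrefix_succ, List.sum_append, ih, cSum, cSum, Finset.sum_Icc_succ_top (by omega)]
    simp

lemma cPrefix_append_ne_zero_cons {m : ℕ} (hm : 1 ≤ m) (r xs : List ℕ) :
    P.cPrefix m ++ r ≠ 0 :: xs := by
  obtain ⟨k, rfl⟩ := Nat.exists_eq_add_of_le' hm
  simp [cPrefix, List.range_succ_eq_map, P.c1_pos.ne']

@[simp] lemma valueFrom_nil (n : ℕ) : P.valueFrom [] n = 0 := rfl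

@[simp] lemma valueFrom_cons (a : ℕ) (l : List ℕ) (n : ℕ) :
    P.valueFrom (a :: l) n = a * P.H n + P.valueFrom l (n - 1) := rfl

lemma valueFrom_append (x y : List ℕ) (n : ℕ) :
    P.valueFrom (x ++ y) n = P.valueFrom x n + P.valueFrom y (n - x.length) := by
  induction x generalizing n with
  | nil => simp
  | cons a x ih =>
    rw [List.cons_append, valueFrom_cons, valueFrom_cons, ih, List.length_cons,
      Nat.sub_sub, Nat.add_comm 1]
    ring

lemma value_eq_valueFrom (l : List ℕ) : P.value l = P.valueFrom l l.length := by
  induction l with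
  | nil => simp [value]
  | cons a l ih =>
    rw [value, List.length_cons, Finset.sum_range_succ', valueFrom_cons, Nat.add_sub_cancel,
      ← ih, value, add_comm]
    simp

lemma prefixValue_succ (n s : ℕ) :
    P.prefixValue n (s + 1) = P.prefixValue n s + P.c (s + 1) * P.H (n - s) := by
  rw [prefixValue, Finset.sum_Icc_succ_top (by omega), prefixValue, Nat.add_sub_add_right]

lemma prefixValue_mono (n : ℕ) {s s' : ℕ} (h : s ≤ s') :
    P.prefixValue n s ≤ P.prefixValue n s' :=
  Finset.sum_le_sum_of_subset (Finset.Icc_subset_Icc_right h)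

lemma valueFrom_cPrefix (m n : ℕ) : P.valueFrom (P.cPrefix m) n = P.prefixValue n m := by
  induction m with
  | zero => simp [prefixValue]
  | succ m ih => rw [cPrefix_succ, valueFrom_append, ih, prefixValue_succ]; simp

lemma prefixValue_of_le {n : ℕ} (h : P.L ≤ n) : P.prefixValue n P.L = P.H (n + 1) :=
  (P.H_rec n h).symm

lemma prefixValue_self_add_one {n : ℕ} (h1 : 1 ≤ n) (h2 : n < P.L) :
    P.prefixValue n n + 1 = P.H (n + 1) :=
  (P.H_init n h1 h2).symm

lemma prefixValue_le {n s : ℕ} (h1 : 1 ≤ n) (h2 : s ≤ P.L) (h3 : s ≤ n) :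
    P.prefixValue n s ≤ P.H (n + 1) := by
  rcases le_or_gt P.L n with h | h
  · exact (P.prefixValue_mono n h2).trans (P.prefixValue_of_le h).le
  · rw [← P.prefixValue_self_add_one h1 h]
    exact (P.prefixValue_mono n h3).trans le_self_add

lemma cSum_pred_add {s : ℕ} (hs : 1 ≤ s) : P.cSum (s - 1) + P.c s = P.cSum s := by
  obtain ⟨k, rfl⟩ := Nat.exists_eq_add_of_le' hs
  rw [Nat.add_sub_cancel, cSum, cSum, Finset.sum_Icc_succ_top (by omega)]

lemma ell_cSum_pred_add {s a : ℕ} (hs : 1 ≤ s) (ha : a < P.c s) :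
    P.ell (P.cSum (s - 1) + a) = s := by
  have hmem : P.cSum (s - 1) + a < P.cSum s := by
    have := P.cSum_pred_add hs; omega
  refine le_antisymm (Nat.sInf_le hmem) (le_csInf ⟨s, hmem⟩ fun k hk => ?_)
  by_contra! hks
  have : P.cSum k ≤ P.cSum (s - 1) :=
    Finset.sum_le_sum_of_subset (Finset.Icc_subset_Icc_right (by omega))
  exact absurd hk (by change ¬ _ < P.cSum k; omega)

lemma H_le_H_succ {m : ℕ} (hm : 1 ≤ m) : P.H m ≤ P.H (m + 1) := by
  have h1 : P.H m ≤ P.prefixValue m 1 := by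
    simpa [prefixValue] using Nat.le_mul_of_pos_left _ P.c1_pos
  rcases le_or_gt P.L m with h | h
  · exact h1.trans ((P.prefixValue_mono m P.L_pos).trans (P.prefixValue_of_le h).le)
  · rw [← P.prefixValue_self_add_one hm h]
    exact h1.trans ((P.prefixValue_mono m hm).trans le_self_add)

lemma H_mono {m k : ℕ} (hm : 1 ≤ m) (h : m ≤ k) : P.H m ≤ P.H k :=
  monotoneOn_nat_Ici_of_le_succ (f := P.H) (fun _ hj => P.H_le_H_succ hj) (Set.mem_Ici.mpr hm)
    (Set.mem_Ici.mpr (hm.trans h)) h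

/-- `[]` stands for the empty tail allowed in Condition 2. -/
def legalLists (n : ℕ) : Set (List ℕ) := {l | l.length = n ∧ (l = [] ∨ P.IsLegal l)}

lemma mem_legalLists_cases {n : ℕ} (hn : 1 ≤ n) {l : List ℕ} (hl : l ∈ P.legalLists n) :
    (n < P.L ∧ l = P.cPrefix n) ∨
      ∃ s a rest, 1 ≤ s ∧ s ≤ P.L ∧ s ≤ n ∧ a < P.c s ∧ rest ∈ P.legalLists (n - s) ∧
        l = P.cPrefix (s - 1) ++ a :: rest := by
  obtain ⟨rfl, rfl | hleg⟩ := hl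
  · simp at hn
  cases hleg with
  | cond1 m _ h2 => exact .inl ⟨by simpa [cPrefix] using h2, by simp [cPrefix]⟩
  | cond2 s hs1 hs2 a ha rest hrest =>
    refine .inr ⟨s, a, rest, hs1, hs2, ?_, ha, ⟨?_, .inr hrest⟩, rfl⟩ <;> simp <;> omega
  | cond2_last s hs1 hs2 a ha =>
    refine .inr ⟨s, a, [], hs1, hs2, ?_, ha, ⟨?_, .inl rfl⟩, rfl⟩ <;> simp <;> omega

lemma valueFrom_cPrefix_append {n s : ℕ} (a : ℕ) (rest : List ℕ) (hs1 : 1 ≤ s) (hsn : s ≤ n) :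
    P.valueFrom (P.cPrefix (s - 1) ++ a :: rest) n
      = P.prefixValue n (s - 1) + a * P.H (n - s + 1) + P.valueFrom rest (n - s) := by
  rw [valueFrom_append, valueFrom_cPrefix, valueFrom_cons, length_cPrefix,
    show n - (s - 1) = n - s + 1 by omega, Nat.add_sub_cancel, add_assoc]

lemma prefixValue_pred_add_mul {n s : ℕ} (hs1 : 1 ≤ s) (hsn : s ≤ n) :
    P.prefixValue n (s - 1) + P.c s * P.H (n - s + 1) = P.prefixValue n s := by
  have h := P.prefixValue_succ n (s - 1)
  rwa [Nat.sub_add_cancel hs1, show n - (s - 1) = n - s + 1 by omega, eq_comm] at h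

lemma prefixValue_pred_add_lt {n s a w : ℕ} (hs1 : 1 ≤ s) (hsn : s ≤ n) (ha : a < P.c s)
    (hw : w < P.H (n - s + 1)) :
    P.prefixValue n (s - 1) + a * P.H (n - s + 1) + w < P.prefixValue n s := by
  rw [← P.prefixValue_pred_add_mul hs1 hsn]
  nlinarith [Nat.mul_le_mul_right (P.H (n - s + 1)) ha]

/-- `s` is the least index with value `< prefixValue n s`, and then `a` and `w` are quotient and
remainder modulo `H (n - s + 1)`. -/
lemma eq_of_prefixValue_pred_add_eq {n s a w s' a' w' : ℕ}
    (hs1 : 1 ≤ s) (hsn : s ≤ n) (ha : a < P.c s) (hw : w < P.H (n - s + 1))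
    (hs1' : 1 ≤ s') (hsn' : s' ≤ n) (ha' : a' < P.c s') (hw' : w' < P.H (n - s' + 1))
    (heq : P.prefixValue n (s - 1) + a * P.H (n - s + 1) + w
         = P.prefixValue n (s' - 1) + a' * P.H (n - s' + 1) + w') :
    s = s' ∧ a = a' ∧ w = w' := by
  have hlt := P.prefixValue_pred_add_lt hs1 hsn ha hw
  have hlt' := P.prefixValue_pred_add_lt hs1' hsn' ha' hw'
  obtain rfl : s = s' := by
    by_contra hne
    rcases Nat.lt_or_gt_of_ne hne with h | h
    · have := P.prefixValue_mono n (show s ≤ s' - 1 by omega); omega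
    · have := P.prefixValue_mono n (show s' ≤ s - 1 by omega); omega
  have hdm : a * P.H (n - s + 1) + w = a' * P.H (n - s + 1) + w' := by omega
  have hH : 0 < P.H (n - s + 1) := P.H_pos _ (by omega)
  have hdiv := congrArg (· / P.H (n - s + 1)) hdm
  simp only [mul_comm _ (P.H _), add_comm (P.H _ * _), Nat.add_mul_div_left _ _ hH,
    Nat.div_eq_of_lt hw, Nat.div_eq_of_lt hw', zero_add] at hdiv
  subst hdiv
  exact ⟨rfl, rfl, by omega⟩

lemma valueFrom_lt (n : ℕ) {l : List ℕ} (hl : l ∈ P.legalLists n) :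
    P.valueFrom l n < P.H (n + 1) := by
  induction n using Nat.strong_induction_on generalizing l with
  | _ n ih =>
  rcases Nat.eq_zero_or_pos n with rfl | hn
  · obtain rfl := List.length_eq_zero_iff.mp hl.1
    simp [P.H_one]
  rcases P.mem_legalLists_cases hn hl with ⟨hnL, rfl⟩ | ⟨s, a, rest, hs1, hsL, hsn, ha, hrest, rfl⟩
  · rw [valueFrom_cPrefix, ← P.prefixValue_self_add_one hn hnL]
    exact Nat.lt_succ_self _
  · rw [P.valueFrom_cPrefix_append a rest hs1 hsn]
    have hw := ih (n - s) (by omega) hrest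
    exact (P.prefixValue_pred_add_lt hs1 hsn ha hw).trans_le (P.prefixValue_le hn hsL hsn)

lemma valueFrom_injOn (n : ℕ) : Set.InjOn (P.valueFrom · n) (P.legalLists n) := by
  induction n using Nat.strong_induction_on with
  | _ n ih =>
  intro l hl l' hl' heq
  rcases Nat.eq_zero_or_pos n with rfl | hn
  · rw [List.length_eq_zero_iff.mp hl.1, List.length_eq_zero_iff.mp hl'.1]
  simp only at heq
  -- a full prefix `cPrefix n` has value `H (n + 1) - 1`, above every Condition 2 value
  have above {s a rest} (hs1 : 1 ≤ s) (hsn : s ≤ n) (ha : a < P.c s)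
      (hrest : rest ∈ P.legalLists (n - s)) :
      P.valueFrom (P.cPrefix (s - 1) ++ a :: rest) n < P.valueFrom (P.cPrefix n) n := by
    rw [P.valueFrom_cPrefix_append a rest hs1 hsn, valueFrom_cPrefix]
    exact (P.prefixValue_pred_add_lt hs1 hsn ha (P.valueFrom_lt _ hrest)).trans_le
      (P.prefixValue_mono n hsn)
  rcases P.mem_legalLists_cases hn hl with ⟨-, rfl⟩ | ⟨s, a, rest, hs1, -, hsn, ha, hrest, rfl⟩ <;>
    rcases P.mem_legalLists_cases hn hl' with
      ⟨-, rfl⟩ | ⟨s', a', rest', hs1', -, hsn', ha', hrest', rfl⟩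
  · rfl
  · exact absurd heq (above hs1' hsn' ha' hrest').ne'
  · exact absurd heq (above hs1 hsn ha hrest).ne
  · rw [P.valueFrom_cPrefix_append a rest hs1 hsn,
      P.valueFrom_cPrefix_append a' rest' hs1' hsn'] at heq
    obtain ⟨rfl, rfl, hw⟩ := P.eq_of_prefixValue_pred_add_eq hs1 hsn ha (P.valueFrom_lt _ hrest)
      hs1' hsn' ha' (P.valueFrom_lt _ hrest') heq
    rw [ih (n - s) (by omega) hrest hrest' hw]

lemma valueFrom_surjOn (n : ℕ) :
    Set.SurjOn (P.valueFrom · n) (P.legalLists n) (Set.Iio (P.H (n + 1))) := by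
  induction n using Nat.strong_induction_on with
  | _ n ih =>
  intro v hv
  rw [Set.mem_Iio] at hv
  rcases Nat.eq_zero_or_pos n with rfl | hn
  · obtain rfl : v = 0 := by simpa [P.H_one] using hv
    exact ⟨[], ⟨rfl, .inl rfl⟩, rfl⟩
  by_cases hfull : n < P.L ∧ v = P.prefixValue n n
  · exact ⟨P.cPrefix n, ⟨by simp, .inr (IsLegal.cond1 n hn hfull.1)⟩,
      (P.valueFrom_cPrefix n n).trans hfull.2.symm⟩
  -- otherwise `v < prefixValue n s` for some `s ≤ min L n`; take the least such `s`
  have hbound : v < P.prefixValue n (min P.L n) := by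
    rcases le_or_gt P.L n with h | h
    · rwa [min_eq_left h, P.prefixValue_of_le h]
    · have := P.prefixValue_self_add_one hn h
      rw [min_eq_right h.le]
      have : v ≠ P.prefixValue n n := fun hc => hfull ⟨h, hc⟩
      omega
  have hex : ∃ s, v < P.prefixValue n s := ⟨_, hbound⟩
  obtain ⟨s, hspec, hmin, hsmin⟩ : ∃ s, v < P.prefixValue n s ∧
      (∀ k < s, P.prefixValue n k ≤ v) ∧ s ≤ min P.L n :=
    ⟨Nat.find hex, Nat.find_spec hex, fun k hk => not_lt.mp (Nat.find_min hex hk),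
      Nat.find_min' hex hbound⟩
  have hs1 : 1 ≤ s := Nat.one_le_iff_ne_zero.mpr fun h0 => by simp [h0, prefixValue] at hspec
  have hlow := hmin (s - 1) (by omega)
  have hsn : s ≤ n := hsmin.trans (min_le_right _ _)
  have hsL : s ≤ P.L := hsmin.trans (min_le_left _ _)
  have hH : 0 < P.H (n - s + 1) := P.H_pos _ (by omega)
  set d := v - P.prefixValue n (s - 1)
  have hd : d < P.c s * P.H (n - s + 1) := by
    have := P.prefixValue_pred_add_mul hs1 hsn
    omega
  obtain ⟨rest, hrest, hval⟩ := ih (n - s) (by omega) (Set.mem_Iio.mpr (Nat.mod_lt d hH))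
  refine ⟨P.cPrefix (s - 1) ++ (d / P.H (n - s + 1)) :: rest, ⟨?_, .inr ?_⟩, ?_⟩
  · have := hrest.1; simp; omega
  · have ha : d / P.H (n - s + 1) < P.c s := (Nat.div_lt_iff_lt_mul hH).mpr hd
    rcases hrest.2 with rfl | hleg
    · exact IsLegal.cond2_last s hs1 hsL _ ha
    · exact IsLegal.cond2 s hs1 hsL _ ha rest hleg
  · simp only at hval ⊢
    rw [P.valueFrom_cPrefix_append _ rest hs1 hsn, hval, mul_comm, add_assoc,
      Nat.div_add_mod]
    omega

lemma bijOn_valueFrom (n : ℕ) :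
    Set.BijOn (P.valueFrom · n) (P.legalLists n) (Set.Iio (P.H (n + 1))) :=
  ⟨fun _ hl => P.valueFrom_lt n hl, P.valueFrom_injOn n, P.valueFrom_surjOn n⟩

lemma ncard_legalLists (n : ℕ) : (P.legalLists n).ncard = P.H (n + 1) := by
  rw [(P.bijOn_valueFrom n).ncard_eq, Set.ncard_Iio_nat]

lemma finite_legalLists (n : ℕ) : (P.legalLists n).Finite :=
  Set.Finite.of_finite_image ((P.bijOn_valueFrom n).image_eq ▸ Set.finite_Iio _)
    (P.bijOn_valueFrom n).injOn

lemma isLegal_zero_cons_iff {xs : List ℕ} : P.IsLegal (0 :: xs) ↔ xs = [] ∨ P.IsLegal xs := by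
  constructor
  · intro h
    generalize hE : 0 :: xs = l at h
    cases h with
    | cond1 m h1 _ =>
      exact absurd ((List.append_nil _).trans hE.symm) (P.cPrefix_append_ne_zero_cons h1 [] xs)
    | cond2 s hs1 _ a _ rest hrest =>
      obtain rfl : s = 1 := by
        by_contra hs
        exact P.cPrefix_append_ne_zero_cons (m := s - 1) (by omega) _ xs hE.symm
      simp only [Nat.sub_self, List.map, List.range_zero, List.nil_append,
        List.cons.injEq] at hE
      exact .inr (hE.2 ▸ hrest)
    | cond2_last s hs1 _ a _ =>
      obtain rfl : s = 1 := by
        by_contra hs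
        exact P.cPrefix_append_ne_zero_cons (m := s - 1) (by omega) _ xs hE.symm
      simp only [Nat.sub_self, List.map, List.range_zero, List.nil_append,
        List.cons.injEq] at hE
      exact .inl hE.2
  · rintro (rfl | h)
    · exact IsLegal.cond2_last 1 le_rfl P.L_pos 0 P.c1_pos
    · exact IsLegal.cond2 1 le_rfl P.L_pos 0 P.c1_pos xs h

def legalDecomps (n : ℕ) : Set (List ℕ) := {l | P.LegalDecomp l ∧ l.length = n}

lemma legalDecomps_eq_diff {n : ℕ} (hn : 1 ≤ n) :
    P.legalDecomps n = P.legalLists n \ List.cons 0 '' P.legalLists (n - 1) := by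
  ext l
  rcases l with _ | ⟨a, xs⟩
  · simp [legalDecomps, LegalDecomp, legalLists]
    omega
  · simp only [legalDecomps, LegalDecomp, legalLists, Set.mem_ofPred_eq, Set.mem_sdiff,
      Set.mem_image, List.cons.injEq, List.length_cons, List.headI_cons, reduceCtorEq,
      false_or]
    constructor
    · rintro ⟨⟨hleg, ha⟩, hlen⟩
      exact ⟨⟨hlen, hleg⟩, by rintro ⟨r, -, rfl, -⟩; exact ha.ne rfl⟩
    · rintro ⟨⟨hlen, hleg⟩, hz⟩
      refine ⟨⟨hleg, Nat.pos_of_ne_zero fun ha => hz ⟨xs, ⟨by omega, ?_⟩, ha.symm, rfl⟩⟩, hlen⟩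
      exact (P.isLegal_zero_cons_iff).mp (ha ▸ hleg)

lemma ncard_legalDecomps {n : ℕ} (hn : 1 ≤ n) :
    (P.legalDecomps n).ncard = P.H (n + 1) - P.H n := by
  have hsub : List.cons 0 '' P.legalLists (n - 1) ⊆ P.legalLists n := by
    rintro _ ⟨r, ⟨hlen, hr⟩, rfl⟩
    exact ⟨by simp; omega, .inr (P.isLegal_zero_cons_iff.mpr hr)⟩
  rw [P.legalDecomps_eq_diff hn, Set.ncard_sdiff hsub ((P.finite_legalLists _).image _),
    (List.cons_injective).injOn.ncard_image, ncard_legalLists, ncard_legalLists,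
    Nat.sub_add_cancel hn]

lemma H_length_le_value {l : List ℕ} (hl : P.LegalDecomp l) : P.H l.length ≤ P.value l := by
  obtain ⟨-, hhead⟩ := hl
  rcases l with _ | ⟨a, xs⟩
  · simp at hhead
  rw [value_eq_valueFrom, valueFrom_cons]
  exact (Nat.le_mul_of_pos_left _ hhead).trans le_self_add

lemma value_lt_H_length_succ {l : List ℕ} (hl : P.IsLegal l) :
    P.value l < P.H (l.length + 1) := by
  rw [value_eq_valueFrom]
  exact P.valueFrom_lt _ ⟨rfl, .inr hl⟩

/-- Since `H` is monotone, the intervals `[H m, H (m + 1))` are disjoint, so the value of a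
legal decomposition of length `m` lies in `[H n, H (n + 1))` only for `m = n`. -/
lemma omega_eq_legalDecomps {n : ℕ} (hn : 1 ≤ n) : P.Omega n = P.legalDecomps n := by
  ext l
  refine ⟨fun ⟨hl, hlow, hupp⟩ => ⟨hl, ?_⟩, fun ⟨hl, hlen⟩ => ?_⟩
  · have h1 := P.H_length_le_value hl
    have h2 := P.value_lt_H_length_succ hl.1
    have hlen : 1 ≤ l.length := by
      rcases l with _ | _
      · simp [LegalDecomp] at hl
      · simp
    by_contra hne
    rcases Nat.lt_or_gt_of_ne hne with h | h
    · have := P.H_mono (by omega) (show l.length + 1 ≤ n by omega); omega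
    · have := P.H_mono (by omega) (show n + 1 ≤ l.length by omega); omega
  · exact ⟨hl, hlen ▸ P.H_length_le_value hl, hlen ▸ P.value_lt_H_length_succ hl.1⟩

lemma ncard_omega {n : ℕ} (hn : 1 ≤ n) : (P.Omega n).ncard = P.H (n + 1) - P.H n := by
  rw [P.omega_eq_legalDecomps hn, P.ncard_legalDecomps hn]

end Counting

inductive IsBlockSeq (P : PLRS) : List (List ℕ) → Prop
  | single {b : List ℕ} : P.IsType2Block b ∨ P.IsType1Block b → IsBlockSeq P [b]
  | cons {b : List ℕ} {bs : List (List ℕ)} : P.IsType2Block b → IsBlockSeq P bs →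
      IsBlockSeq P (b :: bs)

section Blocks

variable {P : PLRS}

lemma IsType2Block.length_pos {b : List ℕ} (hb : P.IsType2Block b) : 0 < b.length := by
  obtain ⟨s, -, -, a, -, rfl⟩ := hb
  simp

lemma IsType2Block.length_le {b : List ℕ} (hb : P.IsType2Block b) : b.length ≤ P.L := by
  obtain ⟨s, hs1, hsL, a, -, rfl⟩ := hb
  simp
  omega

lemma IsType1Block.length_le {b : List ℕ} (hb : P.IsType1Block b) : b.length ≤ P.L := by
  obtain ⟨m, -, hm, rfl⟩ := hb
  simpa using hm.le

lemma IsType2Block.firstMismatch_append {b : List ℕ} (hb : P.IsType2Block b) (r : List ℕ) :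
    P.firstMismatch (b ++ r) = some (b.length - 1) := by
  obtain ⟨s, hs1, -, a, ha, rfl⟩ := hb
  have hlen : (P.cPrefix (s - 1) ++ [a]).length = s := by simp [Nat.sub_add_cancel hs1]
  rw [firstMismatch, show (List.range (s - 1)).map (fun i => P.c (i + 1)) = P.cPrefix (s - 1)
    from rfl, hlen, List.find?_range_eq_some, List.append_assoc]
  refine ⟨?_, by simp, fun j hj => ?_⟩
  · rw [List.getD_append_right _ _ _ _ (by simp), length_cPrefix, Nat.sub_self,
      Nat.sub_add_cancel hs1]
    simpa using ha.ne
  · rw [P.getD_cPrefix_append hj]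
    simp

lemma IsType1Block.firstMismatch_eq_none {b : List ℕ} (hb : P.IsType1Block b) :
    P.firstMismatch b = none := by
  obtain ⟨m, -, -, rfl⟩ := hb
  rw [show (List.range m).map (fun i => P.c (i + 1)) = P.cPrefix m ++ [] by simp [cPrefix]]
  refine List.find?_eq_none.mpr fun j hj => ?_
  rw [P.getD_cPrefix_append (by simpa using hj)]
  simp

lemma IsType2Block.blocks_append {b : List ℕ} (hb : P.IsType2Block b) (r : List ℕ) :
    P.blocks (b ++ r) = b :: P.blocks r := by
  have hne := List.append_ne_nil_of_left_ne_nil (List.ne_nil_of_length_pos hb.length_pos) r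
  rw [blocks, dif_neg hne, hb.firstMismatch_append r]
  simp only
  rw [Nat.sub_add_cancel hb.length_pos, List.take_left' rfl, List.drop_left' rfl]

lemma IsType1Block.blocks_eq {b : List ℕ} (hb : P.IsType1Block b) : P.blocks b = [b] := by
  have hne : b ≠ [] := by
    obtain ⟨m, hm, -, rfl⟩ := hb
    simpa [cPrefix] using Nat.one_le_iff_ne_zero.mp hm
  rw [blocks, dif_neg hne, hb.firstMismatch_eq_none]

namespace IsBlockSeq

lemma blocks_flatten {bs : List (List ℕ)} (h : P.IsBlockSeq bs) : P.blocks bs.flatten = bs := by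
  induction h with
  | single hb =>
    rcases hb with hb | hb
    · simpa [show P.blocks [] = [] by rw [blocks]; simp] using hb.blocks_append []
    · simpa using hb.blocks_eq
  | cons hb _ ih => rw [List.flatten_cons, hb.blocks_append, ih]

lemma isLegal_flatten {bs : List (List ℕ)} (h : P.IsBlockSeq bs) : P.IsLegal bs.flatten := by
  induction h with
  | single hb =>
    rcases hb with ⟨s, hs1, hsL, a, ha, rfl⟩ | ⟨m, hm1, hmL, rfl⟩
    · simpa using IsLegal.cond2_last s hs1 hsL a ha
    · simpa using IsLegal.cond1 m hm1 hmL
  | cons hb _ ih =>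
    obtain ⟨s, hs1, hsL, a, ha, rfl⟩ := hb
    simpa using IsLegal.cond2 s hs1 hsL a ha _ ih

lemma length_le {bs : List (List ℕ)} (h : P.IsBlockSeq bs) : ∀ b ∈ bs, b.length ≤ P.L := by
  induction h with
  | single hb => simpa using hb.elim IsType2Block.length_le IsType1Block.length_le
  | cons hb _ ih => exact List.forall_mem_cons.mpr ⟨hb.length_le, ih⟩

lemma length_flatten_le {bs : List (List ℕ)} (h : P.IsBlockSeq bs) :
    bs.flatten.length ≤ P.L * bs.length := by
  rw [List.length_flatten, mul_comm, ← smul_eq_mul, ← List.length_map (f := List.length)]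
  exact List.sum_le_card_nsmul _ _ fun _ hx => by
    obtain ⟨b, hb, rfl⟩ := List.mem_map.mp hx
    exact h.length_le b hb

end IsBlockSeq

lemma isBlockSeq_blocks {l : List ℕ} (h : P.IsLegal l) :
    P.IsBlockSeq (P.blocks l) ∧ (P.blocks l).flatten = l := by
  suffices ∃ bs, P.IsBlockSeq bs ∧ bs.flatten = l by
    obtain ⟨bs, hbs, rfl⟩ := this
    exact ⟨hbs.blocks_flatten.symm ▸ hbs, by rw [hbs.blocks_flatten]⟩
  induction h with
  | cond1 m h1 h2 => exact ⟨_, .single (.inr ⟨m, h1, h2, rfl⟩), by simp⟩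
  | cond2 s hs1 hs2 a ha rest _ ih =>
    obtain ⟨bs, hbs, rfl⟩ := ih
    exact ⟨_, .cons ⟨s, hs1, hs2, a, ha, rfl⟩ hbs, by simp⟩
  | cond2_last s hs1 hs2 a ha => exact ⟨_, .single (.inl ⟨s, hs1, hs2, a, ha, rfl⟩), by simp⟩

lemma isBlockSeq_cons_iff {b : List ℕ} {bs : List (List ℕ)} (hbs : bs ≠ []) :
    P.IsBlockSeq (b :: bs) ↔ P.IsType2Block b ∧ P.IsBlockSeq bs := by
  refine ⟨fun h => ?_, fun ⟨hb, hbs⟩ => .cons hb hbs⟩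
  cases h with
  | single _ => exact absurd rfl hbs
  | cons hb hbs => exact ⟨hb, hbs⟩

lemma isBlockSeq_singleton_iff {b : List ℕ} :
    P.IsBlockSeq [b] ↔ P.IsType2Block b ∨ P.IsType1Block b := by
  refine ⟨fun h => ?_, .single⟩
  cases h with
  | single hb => exact hb
  | cons _ h => nomatch h

lemma isBlockSeq_append_singleton_iff {u : List (List ℕ)} {q : List ℕ} :
    P.IsBlockSeq (u ++ [q]) ↔
      (∀ b ∈ u, P.IsType2Block b) ∧ (P.IsType2Block q ∨ P.IsType1Block q) := by
  induction u with
  | nil => simp [isBlockSeq_singleton_iff]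
  | cons b u ih =>
    rw [List.cons_append, isBlockSeq_cons_iff (by simp), ih, List.forall_mem_cons, and_assoc]

lemma isBlockSeq_append_pair_iff {u : List (List ℕ)} {p q : List ℕ} :
    P.IsBlockSeq (u ++ [p, q]) ↔ P.IsType2Block p ∧ P.IsBlockSeq (u ++ [q]) := by
  rw [show u ++ [p, q] = (u ++ [p]) ++ [q] by simp, isBlockSeq_append_singleton_iff,
    isBlockSeq_append_singleton_iff, List.forall_mem_append, List.forall_mem_singleton]
  tauto

lemma IsType2Block.ell_sum {b : List ℕ} (hb : P.IsType2Block b) :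
    P.ell b.sum = b.length ∧ P.type2Block b.sum = b := by
  obtain ⟨s, hs1, -, a, ha, rfl⟩ := hb
  have hsum : ((P.cPrefix (s - 1)) ++ [a]).sum = P.cSum (s - 1) + a := by
    simp [sum_cPrefix]
  change P.ell (P.cPrefix (s - 1) ++ [a]).sum = _ ∧
    P.type2Block (P.cPrefix (s - 1) ++ [a]).sum = _
  rw [hsum, type2Block, P.ell_cSum_pred_add hs1 ha]
  refine ⟨by simp; omega, ?_⟩
  change P.cPrefix (s - 1) ++ [P.cSum (s - 1) + a - P.cSum (s - 1)] = P.cPrefix (s - 1) ++ [a]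
  simp

lemma isType2Block_type2Block {t : ℕ} (ht : t < P.size) :
    P.IsType2Block (P.type2Block t) ∧ (P.type2Block t).sum = t := by
  have hex : ∃ s, t < P.cSum s := ⟨P.L, ht⟩
  obtain ⟨s, hspec, hmin, hsL⟩ : ∃ s, t < P.cSum s ∧ (∀ k < s, P.cSum k ≤ t) ∧ s ≤ P.L :=
    ⟨Nat.find hex, Nat.find_spec hex, fun k hk => not_lt.mp (Nat.find_min hex hk),
      Nat.find_min' hex ht⟩
  have hs1 : 1 ≤ s := Nat.one_le_iff_ne_zero.mpr fun h0 => by simp [h0, cSum] at hspec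
  have hlow := hmin (s - 1) (by omega)
  have ha : t - P.cSum (s - 1) < P.c s := by
    have := P.cSum_pred_add hs1; omega
  have hb : P.IsType2Block (P.cPrefix (s - 1) ++ [t - P.cSum (s - 1)]) :=
    ⟨s, hs1, hsL, _, ha, rfl⟩
  have hsum : (P.cPrefix (s - 1) ++ [t - P.cSum (s - 1)]).sum = t := by
    simp [sum_cPrefix]; omega
  rw [← hsum, hb.ell_sum.2]
  exact ⟨hb, rfl⟩

lemma length_type2Block {t : ℕ} (ht : t < P.size) : (P.type2Block t).length = P.ell t := by
  obtain ⟨hb, hsum⟩ := isType2Block_type2Block ht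
  rw [← hb.ell_sum.1, hsum]

lemma ell_le {t : ℕ} (ht : t < P.size) : P.ell t ≤ P.L :=
  length_type2Block ht ▸ (isType2Block_type2Block ht).1.length_le

lemma stlBlock_of_blocks_eq {l p q : List ℕ} {u : List (List ℕ)}
    (h : P.blocks l = u ++ [p, q]) : P.stlBlock l = p := by
  simp [stlBlock, h]

lemma removeSTL_of_blocks_eq {l p q : List ℕ} {u : List (List ℕ)}
    (h : P.blocks l = u ++ [p, q]) : P.removeSTL l = (u ++ [q]).flatten := by
  simp [removeSTL, h, List.eraseIdx_cons_succ]

lemma insertSTL_of_blocks_eq {r q : List ℕ} {u : List (List ℕ)} (t : ℕ)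
    (h : P.blocks r = u ++ [q]) : P.insertSTL t r = (u ++ [P.type2Block t, q]).flatten := by
  simp [insertSTL, h, List.insertIdx_succ_cons]

lemma legalDecomp_flatten_iff {u v : List (List ℕ)} (hu : u.flatten ≠ [])
    (h : P.IsBlockSeq (u ++ v)) : P.LegalDecomp (u ++ v).flatten ↔ 0 < u.flatten.headI := by
  obtain ⟨a, x, hx⟩ := List.exists_cons_of_ne_nil hu
  have hhead : (u ++ v).flatten.headI = a := by simp [List.flatten_append, hx]
  rw [LegalDecomp, hhead, hx, List.headI_cons]
  exact and_iff_right h.isLegal_flatten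

/-- The leading entry, which must be positive, lies in `u` and is not affected by `p`. -/
lemma flatten_mem_legalDecomps_iff {u : List (List ℕ)} {p q : List ℕ} {m : ℕ}
    (hu : u.flatten ≠ []) (hp : P.IsType2Block p) (huq : P.IsBlockSeq (u ++ [q])) :
    (u ++ [p, q]).flatten ∈ P.legalDecomps (m + p.length) ↔
      (u ++ [q]).flatten ∈ P.legalDecomps m := by
  have hupq := isBlockSeq_append_pair_iff.mpr ⟨hp, huq⟩
  simp only [legalDecomps, Set.mem_ofPred_eq, legalDecomp_flatten_iff hu hupq,
    legalDecomp_flatten_iff hu huq]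
  simp only [List.flatten_append, List.length_append, List.flatten_cons, List.flatten_nil]
  constructor <;> rintro ⟨h1, h2⟩ <;> exact ⟨h1, by omega⟩

lemma removeSTL_mem_legalDecomps {n t : ℕ} (hn : 2 * P.L < n) {l : List ℕ}
    (hl : l ∈ P.legalDecomps n) (hZ : P.Z l = t) :
    P.removeSTL l ∈ P.legalDecomps (n - P.ell t) ∧ P.insertSTL t (P.removeSTL l) = l := by
  obtain ⟨hbs, hfl⟩ := isBlockSeq_blocks hl.1.1
  have hcount : 2 < (P.blocks l).length := by
    have := hbs.length_flatten_le
    rw [hfl, hl.2] at this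
    exact Nat.lt_of_mul_lt_mul_left (a := P.L) (by linarith)
  obtain ⟨u, p, q, hsplit⟩ := List.exists_eq_append_pair hcount.le
  rw [hsplit] at hbs hfl
  obtain ⟨hp, huq⟩ := isBlockSeq_append_pair_iff.mp hbs
  obtain ⟨hell, htype⟩ := hp.ell_sum
  rw [show p.sum = t by rw [← hZ, Z, stlBlock_of_blocks_eq hsplit]] at hell htype
  have hlen : u.flatten.length + p.length + q.length = n := by
    rw [← hl.2, ← hfl]; simp [List.flatten_append, add_assoc]
  have hq := hbs.length_le q (by simp)
  have hu : u.flatten ≠ [] := List.ne_nil_of_length_pos (by have := hp.length_le; omega)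
  rw [removeSTL_of_blocks_eq hsplit, hell]
  refine ⟨(flatten_mem_legalDecomps_iff hu hp huq).mp ?_, ?_⟩
  · rwa [Nat.sub_add_cancel (by omega), hfl]
  · rw [insertSTL_of_blocks_eq t huq.blocks_flatten, htype, hfl]

lemma insertSTL_mem_legalDecomps {n t : ℕ} (hn : 2 * P.L < n) (ht : t < P.size) {r : List ℕ}
    (hr : r ∈ P.legalDecomps (n - P.ell t)) :
    P.insertSTL t r ∈ P.legalDecomps n ∧ P.Z (P.insertSTL t r) = t ∧
      P.removeSTL (P.insertSTL t r) = r := by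
  obtain ⟨hbs, hfl⟩ := isBlockSeq_blocks hr.1.1
  obtain ⟨hb, hsum⟩ := isType2Block_type2Block ht
  rw [← length_type2Block ht] at hr
  have hbL := hb.length_le
  rcases (P.blocks r).eq_nil_or_concat' with hnil | ⟨u, q, hsplit⟩
  · rw [hnil, List.flatten_nil] at hfl
    exact absurd hr.1.2 (by simp [← hfl])
  rw [hsplit] at hbs hfl
  have hlen : u.flatten.length + q.length = n - (P.type2Block t).length := by
    rw [← hr.2, ← hfl]; simp [List.flatten_append]
  have hq := hbs.length_le q (by simp)
  have hu : u.flatten ≠ [] := List.ne_nil_of_length_pos (by omega)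
  have hins := insertSTL_of_blocks_eq t hsplit
  have hblocks := (isBlockSeq_append_pair_iff.mpr ⟨hb, hbs⟩).blocks_flatten
  refine ⟨?_, ?_, ?_⟩
  · rw [hins, ← Nat.sub_add_cancel (show (P.type2Block t).length ≤ n by omega)]
    exact (flatten_mem_legalDecomps_iff hu hb hbs).mpr (hfl ▸ hr)
  · rw [Z, stlBlock_of_blocks_eq (hins ▸ hblocks), hsum]
  · rw [removeSTL_of_blocks_eq (hins ▸ hblocks), hfl]

lemma ncard_omega_inter_Z {n t : ℕ} (hn : 2 * P.L < n) (ht : t < P.size) :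
    (P.Omega n ∩ {l | P.Z l = t}).ncard = (P.Omega (n - P.ell t)).ncard := by
  have hell := ell_le ht
  rw [P.omega_eq_legalDecomps (by omega), P.omega_eq_legalDecomps (by omega)]
  have hrem {l} (hl : l ∈ P.legalDecomps n ∩ {l | P.Z l = t}) :=
    removeSTL_mem_legalDecomps hn hl.1 hl.2
  have hins {r} (hr : r ∈ P.legalDecomps (n - P.ell t)) := insertSTL_mem_legalDecomps hn ht hr
  exact Set.BijOn.ncard_eq (f := P.removeSTL) (Set.InvOn.bijOn (f' := P.insertSTL t)
    ⟨fun _ hl => (hrem hl).2, fun _ hr => (hins hr).2.2⟩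
    (fun _ hl => (hrem hl).1) (fun _ hr => ⟨(hins hr).1, (hins hr).2.1⟩))

end Blocks

end PLRS

/-- For `n > 2L` and `0 ≤ t < S`,
`P(Z_n = t) = (H_{n-ℓ(t)+1} - H_{n-ℓ(t)}) / (H_{n+1} - H_n)`. -/
theorem prob_Z_eq (P : PLRS) (n t : ℕ) (hn : 2 * P.L < n) (ht : t < P.size) :
    P.prob n {l | P.Z l = t} =
      ((P.H (n - P.ell t + 1) : ℝ) - (P.H (n - P.ell t) : ℝ)) /
        ((P.H (n + 1) : ℝ) - (P.H n : ℝ)) := by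
  have hell := ell_le ht
  rw [prob, ncard_omega_inter_Z hn ht, P.ncard_omega (by omega), P.ncard_omega (by omega),
    Nat.cast_sub (P.H_le_H_succ (by omega)), Nat.cast_sub (P.H_le_H_succ (by omega))]
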